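/- arXiv:1312.2931 — 4 statements merged into one kernel-verified Lean document; each statement's English description precedes it below -/
import Mathlib

section
/- Let u, f be bounded uniformly continuous real-valued functions on ℝ and let 0 < α < β. If u(t) = f(t) + α ∫₀^∞ e^{-βτ} u(t-τ) dτ for all t ∈ ℝ, then u(t) = f(t) + α ∫₀^∞ e^{-(β-α)τ} f(t-τ) dτ for all t ∈ ℝ. -/
/-!
Write `K_b g (t) = ∫_0^∞ e^{-bτ} g(t - τ) dτ = e^{-bt} ∫_{-∞}^t e^{bs} g(s) ds`. For bounded continuous
`g` this is differentiable with `(K_b g)' = g - b K_b g`. Using the equation `u - f = α K_β u`, the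
bounded function `d = u - f - α K_{β-α} f` then satisfies `d' = -(β - α) d`, so `e^{(β-α)t} d(t)` is
constant; since `β - α > 0` and `d` is bounded, letting `t → -∞` forces this constant to vanish.
-/

open MeasureTheory Real Set Filter Topology

noncomputable def expConv (b : ℝ) (g : ℝ → ℝ) (t : ℝ) : ℝ :=
  ∫ τ in Ioi (0 : ℝ), exp (-b * τ) * g (t - τ)

section expConv

variable {b C : ℝ} {g : ℝ → ℝ}

lemma abs_expConv_le (hb : 0 < b) (hC : ∀ s, |g s| ≤ C) (t : ℝ) : |expConv b g t| ≤ C / b := by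
  have hbound : ‖expConv b g t‖ ≤ ∫ τ in Ioi (0 : ℝ), C * exp (-b * τ) := by
    refine norm_integral_le_of_norm_le ((integrableOn_exp_mul_Ioi (neg_neg_of_pos hb) 0).const_mul C)
      (ae_of_all _ fun τ => ?_)
    rw [norm_mul, norm_of_nonneg (exp_pos _).le, mul_comm]
    exact mul_le_mul_of_nonneg_right (hC _) (exp_pos _).le
  rwa [integral_const_mul, integral_exp_mul_Ioi (neg_neg_of_pos hb), mul_zero, exp_zero,
    div_neg, neg_div, neg_neg, mul_one_div] at hbound

lemma expConv_eq_exp_mul_integral_Iic (b : ℝ) (g : ℝ → ℝ) (t : ℝ) :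
    expConv b g t = exp (-b * t) * ∫ s in Iic t, exp (b * s) * g s := by
  have hsubst := (volume.measurePreserving_sub_left t).setIntegral_preimage_emb
    (measurableEmbedding_subLeft t) (fun s => exp (b * s) * g s) (Iic t)
  rw [preimage_const_sub_Iic, sub_self, integral_Ici_eq_integral_Ioi] at hsubst
  rw [← hsubst, ← integral_const_mul, expConv]
  congr 1 with τ
  rw [← mul_assoc, ← exp_add]
  ring_nf

lemma hasDerivAt_integral_Iic {h : ℝ → ℝ} (hc : Continuous h) (hi : ∀ a, IntegrableOn h (Iic a))
    (t : ℝ) : HasDerivAt (fun x => ∫ s in Iic x, h s) (h t) t := by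
  have hsplit : (fun x => ∫ s in Iic x, h s) = fun x => (∫ s in Iic 0, h s) + ∫ s in 0..x, h s := by
    ext x
    rw [← intervalIntegral.integral_Iic_sub_Iic (hi 0) (hi x)]
    ring
  rw [hsplit]
  exact (hc.integral_hasStrictDerivAt 0 t).hasDerivAt.const_add _

lemma hasDerivAt_expConv (hb : 0 < b) (hg : Continuous g) (hC : ∀ s, |g s| ≤ C) (t : ℝ) :
    HasDerivAt (expConv b g) (g t - b * expConv b g t) t := by
  have hint (a : ℝ) : IntegrableOn (fun s => exp (b * s) * g s) (Iic a) :=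
    (integrableOn_exp_mul_Iic hb a).mul_bdd hg.aestronglyMeasurable.restrict (ae_of_all _ hC)
  have hF := hasDerivAt_integral_Iic (by fun_prop) hint t
  have hE : HasDerivAt (fun x => exp (-b * x)) (exp (-b * t) * -b) t := by
    simpa using ((hasDerivAt_id t).const_mul (-b)).exp
  rw [funext (expConv_eq_exp_mul_integral_Iic b g)]
  refine (hE.mul hF).congr_deriv ?_
  beta_reduce
  rw [← mul_assoc (exp (-b * t)), ← exp_add, neg_mul, neg_add_cancel, exp_zero]
  ring

end expConv

lemma eq_zero_of_hasDerivAt_neg_mul_of_abs_le {c C : ℝ} (hc : 0 < c) {d : ℝ → ℝ}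
    (hd : ∀ t, HasDerivAt d (-c * d t) t) (hC : ∀ t, |d t| ≤ C) (t : ℝ) : d t = 0 := by
  have hderiv (s : ℝ) : HasDerivAt (fun s => exp (c * s) * d s) 0 s := by
    have hE : HasDerivAt (fun s => exp (c * s)) (exp (c * s) * c) s := by
      simpa using ((hasDerivAt_id s).const_mul c).exp
    exact (hE.mul (hd s)).congr_deriv (by ring)
  have hconst (s : ℝ) : exp (c * s) * d s = exp (c * t) * d t :=
    is_const_of_deriv_eq_zero (fun s => (hderiv s).differentiableAt) (fun s => (hderiv s).deriv) s t
  have hle (s : ℝ) : exp (c * t) * |d t| ≤ C * exp (c * s) := by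
    rw [← abs_of_pos (exp_pos (c * t)), ← abs_mul, ← hconst s, abs_mul, abs_of_pos (exp_pos _),
      mul_comm]
    exact mul_le_mul_of_nonneg_right (hC s) (exp_pos _).le
  have hlim : Tendsto (fun s => C * exp (c * s)) atBot (𝓝 0) := by
    simpa using (tendsto_exp_atBot.comp (tendsto_id.const_mul_atBot hc)).const_mul C
  have hnonpos : exp (c * t) * |d t| ≤ 0 := ge_of_tendsto' hlim hle
  exact abs_nonpos_iff.1 (nonpos_of_mul_nonpos_right hnonpos (exp_pos _))

theorem stmt_0 (u f : ℝ → ℝ) (α β : ℝ) (hα : 0 < α) (hαβ : α < β)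
    (hu_bd : ∃ C, ∀ t, |u t| ≤ C) (hf_bd : ∃ C, ∀ t, |f t| ≤ C)
    (hu_uc : UniformContinuous u) (hf_uc : UniformContinuous f)
    (h : ∀ t : ℝ, u t = f t + α * ∫ τ in Set.Ioi (0:ℝ), Real.exp (-β * τ) * u (t - τ)) :
    ∀ t : ℝ, u t = f t + α * ∫ τ in Set.Ioi (0:ℝ), Real.exp (-(β - α) * τ) * f (t - τ) := by
  obtain ⟨Cu, hCu⟩ := hu_bd
  obtain ⟨Cf, hCf⟩ := hf_bd
  have hβ : 0 < β := hα.trans hαβ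
  have hγ : 0 < β - α := sub_pos.2 hαβ
  have hu : ∀ t, u t = f t + α * expConv β u t := h
  set d : ℝ → ℝ := fun t => α * expConv β u t - α * expConv (β - α) f t
  have hd_deriv (t : ℝ) : HasDerivAt d (-(β - α) * d t) t :=
    (((hasDerivAt_expConv hβ hu_uc.continuous hCu t).const_mul α).sub
      ((hasDerivAt_expConv hγ hf_uc.continuous hCf t).const_mul α)).congr_deriv
        (by linear_combination α * hu t)
  have hd_bound (t : ℝ) : |d t| ≤ α * (Cu / β) + α * (Cf / (β - α)) := by
    refine (abs_sub _ _).trans ?_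
    rw [abs_mul, abs_mul, abs_of_pos hα]
    gcongr
    exacts [abs_expConv_le hβ hCu t, abs_expConv_le hγ hCf t]
  intro t
  have hdt : d t = 0 := eq_zero_of_hasDerivAt_neg_mul_of_abs_le hγ hd_deriv hd_bound t
  change u t = f t + α * expConv (β - α) f t
  linear_combination hu t + hdt
end

section
/- Let X be a real normed space, x₁, x₂, y₁, y₂ ∈ X, ω > 0 and f ∈ ℝ. Suppose ‖x₁ - x₂‖ ≤ ‖x₁ - x₂ - λ(y₁ - y₂)‖ + λ f for all 0 < λ < ω. Then for all 0 < λ, μ < ω: (λ + μ)‖x₁ - x₂‖ ≤ λ‖x₂ - x₁ - μ y₂‖ + μ‖x₁ - x₂ - λ y₁‖ + λμ f. -/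
/-! With `ν = lμ / (l + μ)`, the vector `x₁ - x₂ - ν • (y₁ - y₂)` is the convex combination of
`x₁ - x₂ - l • y₁` and `x₁ - x₂ + μ • y₂` with weights `μ / (l + μ)` and `l / (l + μ)`. Applying
the hypothesis at `ν < min l μ` and the triangle inequality gives the claim. -/

section HarmonicCombination

variable {R M : Type*} [CommRing R] [AddCommGroup M] [Module R M]

theorem add_smul_sub_smul_sub_eq {l μ ν : R} (hν : (l + μ) * ν = l * μ) (x y₁ y₂ : M) :
    (l + μ) • (x - ν • (y₁ - y₂)) = μ • (x - l • y₁) + l • (x + μ • y₂) := by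
  simp only [smul_sub, smul_add, smul_smul, hν, add_smul]
  rw [mul_comm μ l]
  abel

end HarmonicCombination

theorem add_mul_norm_sub_smul_sub_le {X : Type*} [SeminormedAddCommGroup X] [NormedSpace ℝ X]
    {l μ ν : ℝ} (hl : 0 ≤ l) (hμ : 0 ≤ μ) (hν : (l + μ) * ν = l * μ) (x y₁ y₂ : X) :
    (l + μ) * ‖x - ν • (y₁ - y₂)‖ ≤ μ * ‖x - l • y₁‖ + l * ‖x + μ • y₂‖ := by
  calc (l + μ) * ‖x - ν • (y₁ - y₂)‖ = ‖(l + μ) • (x - ν • (y₁ - y₂))‖ := by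
        rw [norm_smul, Real.norm_of_nonneg (by positivity)]
    _ = ‖μ • (x - l • y₁) + l • (x + μ • y₂)‖ := by rw [add_smul_sub_smul_sub_eq hν]
    _ ≤ ‖μ • (x - l • y₁)‖ + ‖l • (x + μ • y₂)‖ := norm_add_le _ _
    _ = μ * ‖x - l • y₁‖ + l * ‖x + μ • y₂‖ := by
        rw [norm_smul, norm_smul, Real.norm_of_nonneg hμ, Real.norm_of_nonneg hl]

theorem stmt_7_general (X : Type*) [NormedAddCommGroup X] [NormedSpace ℝ X]
    (x₁ x₂ y₁ y₂ : X) (ω : ℝ) (f : ℝ)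
    (h : ∀ l : ℝ, 0 < l → l < ω →
      ‖x₁ - x₂‖ ≤ ‖x₁ - x₂ - l • (y₁ - y₂)‖ + l * f) :
    ∀ l μ : ℝ, 0 < l → l < ω → 0 < μ → μ < ω →
      (l + μ) * ‖x₁ - x₂‖ ≤
        l * ‖x₂ - x₁ - μ • y₂‖ + μ * ‖x₁ - x₂ - l • y₁‖ + l * μ * f := by
  intro l μ hl hlω hμ hμω
  set ν := l * μ / (l + μ)
  have hν : (l + μ) * ν = l * μ := mul_div_cancel₀ _ (by positivity)
  have hν_lt : ν < l := by
    rw [div_lt_iff₀ (by positivity)]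
    nlinarith
  have hmain := mul_le_mul_of_nonneg_left (h ν (by positivity) (by linarith)) (by positivity : 0 ≤ l + μ)
  have hcomb := add_mul_norm_sub_smul_sub_le hl.le hμ.le hν (x₁ - x₂) y₁ y₂
  rw [← norm_neg (x₁ - x₂ + μ • y₂), show -(x₁ - x₂ + μ • y₂) = x₂ - x₁ - μ • y₂ by abel] at hcomb
  have hνf : (l + μ) * ν * f = l * μ * f := by rw [hν]
  linarith

theorem stmt_7 (X : Type*) [NormedAddCommGroup X] [NormedSpace ℝ X]
    (x₁ x₂ y₁ y₂ : X) (ω : ℝ) (hω : 0 < ω) (f : ℝ)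
    (h : ∀ l : ℝ, 0 < l → l < ω →
      ‖x₁ - x₂‖ ≤ ‖x₁ - x₂ - l • (y₁ - y₂)‖ + l * f) :
    ∀ l μ : ℝ, 0 < l → l < ω → 0 < μ → μ < ω →
      (l + μ) * ‖x₁ - x₂‖ ≤
        l * ‖x₂ - x₁ - μ • y₂‖ + μ * ‖x₁ - x₂ - l • y₁‖ + l * μ * f :=
  stmt_7_general X x₁ x₂ y₁ y₂ ω f h
end

section
/- For all R > 0, (1/R) ∫₀^R ∫₀^R I₀(2√(xy)) e^{-x-y} dy dx ≤ 1, where I₀ is the modified Bessel function of the first kind of order zero. -/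
/-!
Expanding `I₀` as a power series, `I₀(2√(xy)) e^{-py} = ∑ₖ (x^k / k!²) y^k e^{-py}`, and
integrating term by term with `∫₀^∞ y^k e^{-py} dy = k! / p^{k+1}` gives
`∫₀^∞ I₀(2√(xy)) e^{-py} dy = e^{x/p} / p`. For `p = 1`, the integral over `y ∈ [0, R]` of
`I₀(2√(xy)) e^{-x-y}` is therefore at most `e^{-x} e^{x} = 1`, so the double integral is at
most `R`.
-/

open MeasureTheory Real

/-- The modified Bessel function of the first kind of order zero. -/
noncomputable def besselI0 (z : ℝ) : ℝ :=
  ∑' k : ℕ, (z / 2) ^ (2 * k) / ((Nat.factorial k : ℝ)) ^ 2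

open Set
open scoped Nat

lemma summable_pow_div_factorial_sq (u : ℝ) :
    Summable fun k : ℕ => u ^ k / (k ! : ℝ) ^ 2 := by
  refine (Real.summable_pow_div_factorial |u|).of_norm_bounded fun k => ?_
  have hk : (1 : ℝ) ≤ k ! := by exact_mod_cast Nat.one_le_of_lt (Nat.factorial_pos k)
  rw [norm_div, norm_pow, norm_pow, Real.norm_eq_abs, Real.norm_natCast]
  exact div_le_div_of_nonneg_left (by positivity) (by positivity) (by nlinarith)

lemma besselI0_eq_tsum (z : ℝ) :
    besselI0 z = ∑' k : ℕ, ((z / 2) ^ 2) ^ k / (k ! : ℝ) ^ 2 := by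
  simp only [besselI0, pow_mul]

lemma besselI0_nonneg (z : ℝ) : 0 ≤ besselI0 z :=
  (besselI0_eq_tsum z).symm ▸ tsum_nonneg fun k => by positivity

@[fun_prop]
lemma measurable_besselI0 : Measurable besselI0 := by
  rw [funext besselI0_eq_tsum]
  exact measurable_of_tendsto_metrizable (fun n => by fun_prop)
    (tendsto_pi_nhds.2 fun z => (summable_pow_div_factorial_sq _).hasSum.tendsto_sum_nat)

lemma besselI0_two_mul_sqrt {u : ℝ} (hu : 0 ≤ u) :
    besselI0 (2 * √u) = ∑' k : ℕ, u ^ k / (k ! : ℝ) ^ 2 := by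
  rw [besselI0_eq_tsum, mul_div_cancel_left₀ _ two_ne_zero, Real.sq_sqrt hu]

lemma integral_pow_mul_exp_neg_mul_Ioi (k : ℕ) {p : ℝ} (hp : 0 < p) :
    ∫ y in Ioi (0 : ℝ), y ^ k * exp (-(p * y)) = k ! / p ^ (k + 1) := by
  have h := integral_rpow_mul_exp_neg_mul_Ioi (a := k + 1) (by positivity) hp
  rw [add_sub_cancel_right, Real.Gamma_nat_eq_factorial, ← Nat.cast_succ,
    Real.rpow_natCast] at h
  rw [div_eq_mul_one_div, mul_comm, ← one_div_pow, ← h]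
  refine setIntegral_congr_fun measurableSet_Ioi fun y _ => ?_
  simp only [Real.rpow_natCast]

lemma integrableOn_pow_mul_exp_neg_mul_Ioi (k : ℕ) {p : ℝ} (hp : 0 < p) :
    IntegrableOn (fun y : ℝ => y ^ k * exp (-(p * y))) (Ioi 0) := by
  refine (integrableOn_rpow_mul_exp_neg_mul_rpow (s := k) (by linarith [k.cast_nonneg (α := ℝ)])
    one_pos hp).congr_fun (fun y _ => ?_) measurableSet_Ioi
  simp only [Real.rpow_natCast, Real.rpow_one, neg_mul]

lemma lintegral_pow_mul_exp_neg_mul_Ioi (k : ℕ) {p : ℝ} (hp : 0 < p) :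
    ∫⁻ y in Ioi (0 : ℝ), ENNReal.ofReal (y ^ k * exp (-(p * y))) =
      ENNReal.ofReal (k ! / p ^ (k + 1)) := by
  rw [← integral_pow_mul_exp_neg_mul_Ioi k hp, ofReal_integral_eq_lintegral_ofReal
    (integrableOn_pow_mul_exp_neg_mul_Ioi k hp)]
  exact (ae_restrict_iff' measurableSet_Ioi).2
    (.of_forall fun y hy => mul_nonneg (pow_nonneg (le_of_lt hy) k) (exp_nonneg _))

lemma ofReal_besselI0_mul_exp_neg_mul {x y : ℝ} (p : ℝ) (hx : 0 ≤ x) (hy : 0 ≤ y) :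
    ENNReal.ofReal (besselI0 (2 * √(x * y)) * exp (-(p * y))) =
      ∑' k : ℕ,
        ENNReal.ofReal (x ^ k / (k ! : ℝ) ^ 2) * ENNReal.ofReal (y ^ k * exp (-(p * y))) := by
  rw [besselI0_two_mul_sqrt (mul_nonneg hx hy), ← tsum_mul_right, ENNReal.ofReal_tsum_of_nonneg
    (fun k => by positivity) ((summable_pow_div_factorial_sq _).mul_right _)]
  congr with k
  rw [← ENNReal.ofReal_mul (by positivity)]
  ring_nf

theorem lintegral_besselI0_mul_exp_neg_mul {x p : ℝ} (hx : 0 ≤ x) (hp : 0 < p) :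
    ∫⁻ y in Ioi (0 : ℝ), ENNReal.ofReal (besselI0 (2 * √(x * y)) * exp (-(p * y))) =
      ENNReal.ofReal (exp (x / p) / p) := calc
  _ = ∫⁻ y in Ioi (0 : ℝ), ∑' k : ℕ,
        ENNReal.ofReal (x ^ k / (k ! : ℝ) ^ 2) * ENNReal.ofReal (y ^ k * exp (-(p * y))) :=
    setLIntegral_congr_fun measurableSet_Ioi fun y hy => ofReal_besselI0_mul_exp_neg_mul p hx hy.le
  _ = ∑' k : ℕ, ENNReal.ofReal (x ^ k / (k ! : ℝ) ^ 2) * ENNReal.ofReal (k ! / p ^ (k + 1)) := by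
    rw [lintegral_tsum fun k => by fun_prop]
    congr with k
    rw [lintegral_const_mul' _ _ ENNReal.ofReal_ne_top, lintegral_pow_mul_exp_neg_mul_Ioi k hp]
  _ = ∑' k : ℕ, ENNReal.ofReal ((x / p) ^ k / k ! / p) := by
    congr with k
    rw [← ENNReal.ofReal_mul (by positivity)]
    congr 1
    rw [div_pow]
    field_simp
    ring
  _ = ENNReal.ofReal (exp (x / p) / p) := by
    rw [← ENNReal.ofReal_tsum_of_nonneg (fun k => by positivity)
      ((Real.summable_pow_div_factorial _).div_const _), tsum_div_const, Real.exp_eq_exp_ℝ,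
      NormedSpace.exp_eq_tsum_div]

theorem integrableOn_besselI0_mul_exp_neg_mul {x p : ℝ} (hx : 0 ≤ x) (hp : 0 < p) :
    IntegrableOn (fun y => besselI0 (2 * √(x * y)) * exp (-(p * y))) (Ioi 0) := by
  refine (lintegral_ofReal_ne_top_iff_integrable (by fun_prop) (.of_forall fun y => ?_)).1 ?_
  · exact mul_nonneg (besselI0_nonneg _) (exp_nonneg _)
  · rw [lintegral_besselI0_mul_exp_neg_mul hx hp]
    exact ENNReal.ofReal_ne_top

theorem integral_besselI0_mul_exp_neg_mul {x p : ℝ} (hx : 0 ≤ x) (hp : 0 < p) :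
    ∫ y in Ioi (0 : ℝ), besselI0 (2 * √(x * y)) * exp (-(p * y)) = exp (x / p) / p := by
  rw [integral_eq_lintegral_of_nonneg_ae
      (.of_forall fun y => mul_nonneg (besselI0_nonneg _) (exp_nonneg _)) (by fun_prop),
    lintegral_besselI0_mul_exp_neg_mul hx hp, ENNReal.toReal_ofReal (by positivity)]

lemma setIntegral_Ioc_besselI0_mul_exp_neg_sub_le_one {x : ℝ} (hx : 0 ≤ x) (R : ℝ) :
    ∫ y in Ioc 0 R, besselI0 (2 * √(x * y)) * exp (-x - y) ≤ 1 := by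
  have hfactor : ∀ y, besselI0 (2 * √(x * y)) * exp (-x - y) =
      exp (-x) * (besselI0 (2 * √(x * y)) * exp (-(1 * y))) := fun y => by
    rw [sub_eq_add_neg, exp_add, one_mul]
    ring
  simp_rw [hfactor, integral_const_mul]
  calc exp (-x) * ∫ y in Ioc 0 R, besselI0 (2 * √(x * y)) * exp (-(1 * y))
      ≤ exp (-x) * ∫ y in Ioi 0, besselI0 (2 * √(x * y)) * exp (-(1 * y)) := by
        gcongr
        · exact .of_forall fun y => mul_nonneg (besselI0_nonneg _) (exp_nonneg _)
        · exact integrableOn_besselI0_mul_exp_neg_mul hx one_pos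
        · exact Ioc_subset_Ioi_self
    _ = 1 := by
      rw [integral_besselI0_mul_exp_neg_mul hx one_pos, div_one, div_one, ← exp_add,
        neg_add_cancel, exp_zero]

theorem stmt_10 :
    ∀ R : ℝ, 0 < R →
      (1 / R) * ∫ x in (0:ℝ)..R, ∫ y in (0:ℝ)..R,
        besselI0 (2 * Real.sqrt (x * y)) * Real.exp (-x - y) ≤ 1 := by
  intro R hR
  rw [one_div_mul_eq_div, div_le_one hR]
  have hinner : ∀ x ∈ uIoc 0 R,
      ‖∫ y in (0:ℝ)..R, besselI0 (2 * √(x * y)) * exp (-x - y)‖ ≤ 1 := by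
    intro x hx
    rw [uIoc_of_le hR.le] at hx
    rw [intervalIntegral.integral_of_le hR.le, Real.norm_of_nonneg (setIntegral_nonneg
      measurableSet_Ioc fun y _ => mul_nonneg (besselI0_nonneg _) (exp_nonneg _))]
    exact setIntegral_Ioc_besselI0_mul_exp_neg_sub_le_one hx.1.le R
  calc _ ≤ ‖∫ x in (0:ℝ)..R, ∫ y in (0:ℝ)..R, besselI0 (2 * √(x * y)) * exp (-x - y)‖ :=
        le_norm_self _
    _ ≤ 1 * |R - 0| := intervalIntegral.norm_integral_le_of_norm_le_const hinner
    _ = R := by rw [one_mul, sub_zero, abs_of_pos hR]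
end

section
/- Let G be continuous on [0,T]², δ, γ > 0, and α, β ∈ ℝ. Then the integral equation F(t,s) - δ ∫₀^t e^{α(t-τ)} F(τ,s) dτ - γ ∫₀^s e^{β(s-σ)} F(t,σ) dσ = G(t,s) has a unique continuous solution F on [0,T]², and if Y is continuous and satisfies the corresponding inequality Y(t,s) - δ ∫₀^t e^{α(t-τ)} Y(τ,s) dτ - γ ∫₀^s e^{β(s-σ)} Y(t,σ) dσ ≤ G(t,s) for all (t,s), then Y(t,s) ≤ F(t,s) for all (t,s) ∈ [0,T]². -/
/-!
Substituting `F = exp (L * (t + s)) * g` turns the equation into one of the same shape for `g`,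
with rates `α - L`, `β - L` and right-hand side `exp (-(L * (t + s))) * G`. For `L` large the
new Volterra operator has sup-norm at most `|δ| / (L - α) + |γ| / (L - β) < 1`, so the Picard map
for `g` is a contraction of `C([0,T]², ℝ)` and has a unique fixed point. Since `δ, γ ≥ 0` the Picard
map is monotone; starting from a subsolution its iterates increase and converge to the solution,
which is therefore an upper bound for every subsolution.
-/

open MeasureTheory Real Set intervalIntegral Filter Topology

noncomputable section

def volterra (δ γ α β : ℝ) (f : ℝ → ℝ → ℝ) (t s : ℝ) : ℝ :=
  δ * (∫ τ in (0:ℝ)..t, exp (α * (t - τ)) * f τ s) +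
    γ * ∫ σ in (0:ℝ)..s, exp (β * (s - σ)) * f t σ

lemma integral_exp_mul_sub_le {a t : ℝ} (ha : a < 0) :
    ∫ τ in (0:ℝ)..t, exp (a * (t - τ)) ≤ (-a)⁻¹ := by
  have h : ∫ τ in (0:ℝ)..t, exp (a * (t - τ)) = (1 - exp (a * t)) * (-a)⁻¹ := by
    rw [integral_comp_sub_left (fun x => exp (a * x)), sub_self, sub_zero,
      integral_comp_mul_left exp ha.ne, integral_exp, mul_zero, exp_zero, smul_eq_mul]
    field_simp
    ring
  rw [h]
  exact mul_le_of_le_one_left (inv_nonneg.2 (neg_nonneg.2 ha.le))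
    (sub_le_self _ (exp_pos _).le)

lemma abs_integral_exp_mul_sub_mul_le {a t c : ℝ} {u : ℝ → ℝ} (ha : a < 0) (ht : 0 ≤ t)
    (hu : ∀ τ ∈ Icc 0 t, |u τ| ≤ c) :
    |∫ τ in (0:ℝ)..t, exp (a * (t - τ)) * u τ| ≤ c * (-a)⁻¹ := by
  have hc : 0 ≤ c := (abs_nonneg _).trans (hu 0 ⟨le_rfl, ht⟩)
  rw [← Real.norm_eq_abs]
  calc ‖∫ τ in (0:ℝ)..t, exp (a * (t - τ)) * u τ‖
      ≤ ∫ τ in (0:ℝ)..t, c * exp (a * (t - τ)) := by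
        refine norm_integral_le_of_norm_le ht (Eventually.of_forall fun τ hτ => ?_)
          ((by fun_prop : Continuous fun τ => c * exp (a * (t - τ))).intervalIntegrable _ _)
        rw [Real.norm_eq_abs, abs_mul, abs_of_pos (exp_pos _), mul_comm]
        exact mul_le_mul_of_nonneg_right (hu τ (Ioc_subset_Icc_self hτ)) (exp_pos _).le
    _ ≤ c * (-a)⁻¹ := by
        rw [intervalIntegral.integral_const_mul]
        exact mul_le_mul_of_nonneg_left (integral_exp_mul_sub_le ha) hc

lemma volterra_congr {T δ γ α β t s : ℝ} {f g : ℝ → ℝ → ℝ}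
    (hfg : ∀ t ∈ Icc 0 T, ∀ s ∈ Icc 0 T, f t s = g t s) (ht : t ∈ Icc 0 T) (hs : s ∈ Icc 0 T) :
    volterra δ γ α β f t s = volterra δ γ α β g t s := by
  have hsub {x : ℝ} (hx : x ∈ Icc 0 T) : uIcc 0 x ⊆ Icc 0 T := by
    rw [uIcc_of_le hx.1]; exact Icc_subset_Icc le_rfl hx.2
  unfold volterra
  congr 2
  · exact integral_congr fun τ hτ => by simp only [hfg τ (hsub ht hτ) s hs]
  · exact integral_congr fun σ hσ => by simp only [hfg t ht σ (hsub hs hσ)]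

lemma volterra_exp_neg_mul (δ γ α β L : ℝ) (f : ℝ → ℝ → ℝ) (t s : ℝ) :
    volterra δ γ (α - L) (β - L) (fun t s => exp (-(L * (t + s))) * f t s) t s =
      exp (-(L * (t + s))) * volterra δ γ α β f t s := by
  have hexp (a x y z : ℝ) (hxyz : x + y = t + s) :
      exp ((a - L) * x) * (exp (-(L * y)) * z) = exp (-(L * (t + s))) * (exp (a * x) * z) := by
    rw [← mul_assoc, ← mul_assoc, ← exp_add, ← exp_add, ← hxyz]; ring_nf
  simp only [volterra]
  rw [funext fun τ => hexp α (t - τ) (τ + s) (f τ s) (by ring),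
    funext fun σ => hexp β (s - σ) (t + σ) (f t σ) (by ring),
    intervalIntegral.integral_const_mul, intervalIntegral.integral_const_mul]
  ring

lemma continuous_volterra (δ γ α β : ℝ) {f : ℝ → ℝ → ℝ}
    (hf : Continuous fun p : ℝ × ℝ => f p.1 p.2) :
    Continuous fun p : ℝ × ℝ => volterra δ γ α β f p.1 p.2 := by
  unfold volterra
  refine (continuous_const.mul ?_).add (continuous_const.mul ?_)
  · exact continuous_parametric_intervalIntegral_of_continuous
      ((by fun_prop : Continuous fun q : (ℝ × ℝ) × ℝ => exp (α * (q.1.1 - q.2))).mul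
        (hf.comp (continuous_snd.prodMk (continuous_snd.comp continuous_fst)))) continuous_fst
  · exact continuous_parametric_intervalIntegral_of_continuous
      ((by fun_prop : Continuous fun q : (ℝ × ℝ) × ℝ => exp (β * (q.1.2 - q.2))).mul
        (hf.comp ((continuous_fst.comp continuous_fst).prodMk continuous_snd))) continuous_snd

lemma volterra_sub (δ γ α β : ℝ) {f g : ℝ → ℝ → ℝ} (hf : Continuous fun p : ℝ × ℝ => f p.1 p.2)
    (hg : Continuous fun p : ℝ × ℝ => g p.1 p.2) (t s : ℝ) :
    volterra δ γ α β f t s - volterra δ γ α β g t s = volterra δ γ α β (f - g) t s := by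
  have hI {a x b : ℝ} {u v : ℝ → ℝ} (hu : Continuous u) (hv : Continuous v) :
      ∫ τ in (0:ℝ)..b, exp (a * (x - τ)) * (u τ - v τ) =
        (∫ τ in (0:ℝ)..b, exp (a * (x - τ)) * u τ) - ∫ τ in (0:ℝ)..b, exp (a * (x - τ)) * v τ := by
    have hu' : Continuous fun τ => exp (a * (x - τ)) * u τ := by fun_prop
    have hv' : Continuous fun τ => exp (a * (x - τ)) * v τ := by fun_prop
    rw [← integral_sub (hu'.intervalIntegrable _ _) (hv'.intervalIntegrable _ _)]
    exact integral_congr fun τ _ => mul_sub _ _ _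
  have hfs : Continuous fun τ => f τ s := hf.comp (continuous_id.prodMk continuous_const)
  have hgs : Continuous fun τ => g τ s := hg.comp (continuous_id.prodMk continuous_const)
  have hft : Continuous fun σ => f t σ := hf.comp (continuous_const.prodMk continuous_id)
  have hgt : Continuous fun σ => g t σ := hg.comp (continuous_const.prodMk continuous_id)
  simp only [volterra, Pi.sub_apply]
  rw [hI hfs hgs, hI hft hgt]
  ring

theorem ContractingWith.le_fixedPoint {α : Type*} [MetricSpace α] [CompleteSpace α] [Nonempty α]
    [Preorder α] [ClosedIciTopology α] {K : NNReal} {f : α → α} (hf : ContractingWith K f)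
    (hmono : Monotone f) {x : α} (hx : x ≤ f x) : x ≤ fixedPoint f hf := by
  have hiter (n : ℕ) : x ≤ f^[n] x := by
    induction n with
    | zero => exact le_rfl
    | succ n ih => rw [Function.iterate_succ_apply']; exact hx.trans (hmono ih)
  exact ge_of_tendsto' (hf.tendsto_iterate_fixedPoint x) hiter

instance {X β : Type*} [TopologicalSpace X] [TopologicalSpace β] [PartialOrder β]
    [ClosedIciTopology β] : ClosedIciTopology C(X, β) where
  isClosed_Ici f := by
    simpa only [Ici, ContinuousMap.le_def, ofPred_forall, preimage_ofPred_eq] using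
      isClosed_iInter fun x => isClosed_Ici.preimage (continuous_eval_const x)

abbrev Square (T : ℝ) := Icc (0:ℝ) T × Icc (0:ℝ) T

section Square

variable {T : ℝ}

lemma forall_square {P : ℝ → ℝ → Prop} :
    (∀ p : Square T, P p.1 p.2) ↔ ∀ t ∈ Icc 0 T, ∀ s ∈ Icc 0 T, P t s := by
  simp only [Prod.forall, Subtype.forall]

def squareExtend (hT : 0 ≤ T) (g : C(Square T, ℝ)) (t s : ℝ) : ℝ :=
  g (projIcc 0 T hT t, projIcc 0 T hT s)

lemma continuous_squareExtend (hT : 0 ≤ T) (g : C(Square T, ℝ)) :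
    Continuous fun p : ℝ × ℝ => squareExtend hT g p.1 p.2 :=
  g.continuous.comp ((continuous_projIcc.comp continuous_fst).prodMk
    (continuous_projIcc.comp continuous_snd))

lemma squareExtend_of_mem (hT : 0 ≤ T) (g : C(Square T, ℝ)) {t s : ℝ} (ht : t ∈ Icc 0 T)
    (hs : s ∈ Icc 0 T) : squareExtend hT g t s = g (⟨t, ht⟩, ⟨s, hs⟩) := by
  simp only [squareExtend, projIcc_of_mem _ ht, projIcc_of_mem _ hs]

def volterraSquare (hT : 0 ≤ T) (δ γ α β : ℝ) (g : C(Square T, ℝ)) : C(Square T, ℝ) where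
  toFun p := volterra δ γ α β (squareExtend hT g) p.1 p.2
  continuous_toFun := (continuous_volterra δ γ α β (continuous_squareExtend hT g)).comp
    (continuous_subtype_val.prodMap continuous_subtype_val)

lemma monotone_volterraSquare (hT : 0 ≤ T) {δ γ : ℝ} (α β : ℝ) (hδ : 0 ≤ δ) (hγ : 0 ≤ γ) :
    Monotone (volterraSquare hT δ γ α β) := by
  intro f g hfg p
  have hmono {a x : ℝ} {u v : ℝ → ℝ} (hu : Continuous u) (hv : Continuous v) (huv : u ≤ v)
      (hx : 0 ≤ x) :
      ∫ τ in (0:ℝ)..x, exp (a * (x - τ)) * u τ ≤ ∫ τ in (0:ℝ)..x, exp (a * (x - τ)) * v τ :=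
    integral_mono_on hx
      ((by fun_prop : Continuous fun τ => exp (a * (x - τ)) * u τ).intervalIntegrable _ _)
      ((by fun_prop : Continuous fun τ => exp (a * (x - τ)) * v τ).intervalIntegrable _ _)
      fun τ _ => mul_le_mul_of_nonneg_left (huv τ) (exp_pos _).le
  have hle (t s : ℝ) : squareExtend hT f t s ≤ squareExtend hT g t s := hfg _
  have hf := continuous_squareExtend hT f
  have hg := continuous_squareExtend hT g
  exact add_le_add
    (mul_le_mul_of_nonneg_left (hmono (hf.comp (continuous_id.prodMk continuous_const))
      (hg.comp (continuous_id.prodMk continuous_const)) (fun τ => hle τ _) p.1.2.1) hδ)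
    (mul_le_mul_of_nonneg_left (hmono (hf.comp (continuous_const.prodMk continuous_id))
      (hg.comp (continuous_const.prodMk continuous_id)) (fun σ => hle _ σ) p.2.2.1) hγ)

lemma dist_volterraSquare_le (hT : 0 ≤ T) (δ γ : ℝ) {α β : ℝ} (hα : α < 0) (hβ : β < 0)
    (f g : C(Square T, ℝ)) :
    dist (volterraSquare hT δ γ α β f) (volterraSquare hT δ γ α β g) ≤
      (|δ| * (-α)⁻¹ + |γ| * (-β)⁻¹) * dist f g := by
  have hα' := inv_nonneg.2 (neg_nonneg.2 hα.le)
  have hβ' := inv_nonneg.2 (neg_nonneg.2 hβ.le)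
  refine (ContinuousMap.dist_le (by positivity)).2 fun p => ?_
  have hbound (t s : ℝ) : |(squareExtend hT f - squareExtend hT g) t s| ≤ dist f g :=
    (Real.dist_eq _ _).symm.trans_le (ContinuousMap.dist_apply_le_dist _)
  rw [Real.dist_eq]
  change |volterra δ γ α β _ _ _ - volterra δ γ α β _ _ _| ≤ _
  rw [volterra_sub δ γ α β (continuous_squareExtend hT f) (continuous_squareExtend hT g), volterra]
  refine ((abs_add_le _ _).trans (add_le_add ?_ ?_)).trans_eq
    (show |δ| * (dist f g * (-α)⁻¹) + |γ| * (dist f g * (-β)⁻¹) = _ by ring) <;> rw [abs_mul]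
  · exact mul_le_mul_of_nonneg_left
      (abs_integral_exp_mul_sub_mul_le hα p.1.2.1 fun _ _ => hbound _ _) (abs_nonneg _)
  · exact mul_le_mul_of_nonneg_left
      (abs_integral_exp_mul_sub_mul_le hβ p.2.2.1 fun _ _ => hbound _ _) (abs_nonneg _)

end Square

section Picard

variable {T : ℝ}

def weightedRestrict (L : ℝ) (f : ℝ → ℝ → ℝ)
    (hf : ContinuousOn (fun p : ℝ × ℝ => f p.1 p.2) (Icc 0 T ×ˢ Icc 0 T)) : C(Square T, ℝ) where
  toFun p := exp (-(L * (p.1 + p.2))) * f p.1 p.2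
  continuous_toFun :=
    (by fun_prop : Continuous fun p : Square T => exp (-(L * ((p.1 : ℝ) + p.2)))).mul
      (hf.comp_continuous (continuous_subtype_val.prodMap continuous_subtype_val)
        fun p : Square T => ⟨p.1.2, p.2.2⟩)

lemma weightedRestrict_apply (L : ℝ) {f : ℝ → ℝ → ℝ}
    (hf : ContinuousOn (fun p : ℝ × ℝ => f p.1 p.2) (Icc 0 T ×ˢ Icc 0 T)) (p : Square T) :
    weightedRestrict L f hf p = exp (-(L * (p.1 + p.2))) * f p.1 p.2 :=
  rfl

lemma weightedRestrict_le_iff (L : ℝ) {f g : ℝ → ℝ → ℝ}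
    (hf : ContinuousOn (fun p : ℝ × ℝ => f p.1 p.2) (Icc 0 T ×ˢ Icc 0 T))
    (hg : ContinuousOn (fun p : ℝ × ℝ => g p.1 p.2) (Icc 0 T ×ˢ Icc 0 T)) :
    weightedRestrict L f hf ≤ weightedRestrict L g hg ↔
      ∀ t ∈ Icc 0 T, ∀ s ∈ Icc 0 T, f t s ≤ g t s := by
  rw [ContinuousMap.le_def, ← forall_square]
  exact forall_congr' fun p => mul_le_mul_iff_of_pos_left (exp_pos _)

lemma exists_weightedRestrict_eq (hT : 0 ≤ T) (L : ℝ) (g : C(Square T, ℝ)) :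
    ∃ f : ℝ → ℝ → ℝ, ∃ hf : ContinuousOn (fun p : ℝ × ℝ => f p.1 p.2) (Icc 0 T ×ˢ Icc 0 T),
      weightedRestrict L f hf = g := by
  refine ⟨fun t s => exp (L * (t + s)) * squareExtend hT g t s,
    ((by fun_prop : Continuous fun p : ℝ × ℝ => exp (L * (p.1 + p.2))).mul
      (continuous_squareExtend hT g)).continuousOn, ContinuousMap.ext fun p => ?_⟩
  rw [weightedRestrict_apply, squareExtend_of_mem hT g p.1.2 p.2.2, exp_neg,
    inv_mul_cancel_left₀ (exp_pos _).ne']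

variable (hT : 0 ≤ T) {G : ℝ → ℝ → ℝ}
  (hG : ContinuousOn (fun p : ℝ × ℝ => G p.1 p.2) (Icc 0 T ×ˢ Icc 0 T)) (δ γ α β L : ℝ)

def picardMap (g : C(Square T, ℝ)) : C(Square T, ℝ) :=
  weightedRestrict L G hG + volterraSquare hT δ γ (α - L) (β - L) g

lemma picardMap_weightedRestrict_apply {F : ℝ → ℝ → ℝ}
    (hF : ContinuousOn (fun p : ℝ × ℝ => F p.1 p.2) (Icc 0 T ×ˢ Icc 0 T)) (p : Square T) :
    picardMap hT hG δ γ α β L (weightedRestrict L F hF) p =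
      exp (-(L * (p.1 + p.2))) * (G p.1 p.2 + volterra δ γ α β F p.1 p.2) := by
  change _ * _ + volterra δ γ (α - L) (β - L) _ p.1 p.2 = _
  rw [volterra_congr (g := fun t s => exp (-(L * (t + s))) * F t s)
    (fun t ht s hs => squareExtend_of_mem hT _ ht hs) p.1.2 p.2.2, volterra_exp_neg_mul, ← mul_add]

lemma isFixedPt_picardMap_iff {F : ℝ → ℝ → ℝ}
    (hF : ContinuousOn (fun p : ℝ × ℝ => F p.1 p.2) (Icc 0 T ×ˢ Icc 0 T)) :
    Function.IsFixedPt (picardMap hT hG δ γ α β L) (weightedRestrict L F hF) ↔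
      ∀ t ∈ Icc 0 T, ∀ s ∈ Icc 0 T, F t s - volterra δ γ α β F t s = G t s := by
  rw [Function.IsFixedPt, ContinuousMap.ext_iff, ← forall_square]
  refine forall_congr' fun p => ?_
  rw [picardMap_weightedRestrict_apply, weightedRestrict_apply,
    mul_right_inj' (exp_pos _).ne', sub_eq_iff_eq_add, eq_comm]

lemma le_picardMap_iff {Y : ℝ → ℝ → ℝ}
    (hY : ContinuousOn (fun p : ℝ × ℝ => Y p.1 p.2) (Icc 0 T ×ˢ Icc 0 T)) :
    weightedRestrict L Y hY ≤ picardMap hT hG δ γ α β L (weightedRestrict L Y hY) ↔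
      ∀ t ∈ Icc 0 T, ∀ s ∈ Icc 0 T, Y t s - volterra δ γ α β Y t s ≤ G t s := by
  rw [ContinuousMap.le_def, ← forall_square]
  refine forall_congr' fun p => ?_
  rw [picardMap_weightedRestrict_apply, weightedRestrict_apply,
    mul_le_mul_iff_of_pos_left (exp_pos _), sub_le_iff_le_add]

lemma monotone_picardMap {δ γ : ℝ} (hδ : 0 ≤ δ) (hγ : 0 ≤ γ) :
    Monotone (picardMap hT hG δ γ α β L) :=
  fun _ _ hfg => add_le_add_right (monotone_volterraSquare hT _ _ hδ hγ hfg) _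

lemma contractingWith_picardMap {α β L : ℝ} (hα : α < L) (hβ : β < L)
    (hκ : |δ| * (L - α)⁻¹ + |γ| * (L - β)⁻¹ < 1) :
    ContractingWith (|δ| * (L - α)⁻¹ + |γ| * (L - β)⁻¹).toNNReal (picardMap hT hG δ γ α β L) := by
  have hκ₀ : 0 ≤ |δ| * (L - α)⁻¹ + |γ| * (L - β)⁻¹ := add_nonneg
    (mul_nonneg (abs_nonneg _) (inv_nonneg.2 (sub_pos.2 hα).le))
    (mul_nonneg (abs_nonneg _) (inv_nonneg.2 (sub_pos.2 hβ).le))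
  refine ⟨Real.toNNReal_lt_one.2 hκ, LipschitzWith.of_dist_le_mul fun f g => ?_⟩
  rw [Real.coe_toNNReal _ hκ₀, picardMap, picardMap, dist_add_left]
  simpa only [neg_sub] using
    dist_volterraSquare_le hT δ γ (sub_neg.2 hα) (sub_neg.2 hβ) f g

end Picard

lemma exists_contraction_rate (δ γ α β : ℝ) :
    ∃ L, α < L ∧ β < L ∧ |δ| * (L - α)⁻¹ + |γ| * (L - β)⁻¹ < 1 := by
  have hlim (a c : ℝ) : Tendsto (fun L => c * (L - a)⁻¹) atTop (𝓝 0) := by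
    simpa only [sub_eq_add_neg, mul_zero, Function.comp_def, id] using
      (tendsto_inv_atTop_zero.comp (tendsto_atTop_add_const_right _ (-a) tendsto_id)).const_mul c
  exact ((eventually_gt_atTop α).and ((eventually_gt_atTop β).and
    (((hlim α |δ|).add (hlim β |γ|)).eventually (gt_mem_nhds (by norm_num))))).exists

theorem stmt_19 (T : ℝ) (hT : 0 < T) (G : ℝ → ℝ → ℝ)
    (hG : ContinuousOn (fun p : ℝ × ℝ => G p.1 p.2) (Set.Icc 0 T ×ˢ Set.Icc 0 T))
    (δ γ α β : ℝ) (hδ : 0 < δ) (hγ : 0 < γ) :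
    ∃ F : ℝ → ℝ → ℝ,
      (ContinuousOn (fun p : ℝ × ℝ => F p.1 p.2) (Set.Icc 0 T ×ˢ Set.Icc 0 T) ∧
        ∀ t ∈ Set.Icc 0 T, ∀ s ∈ Set.Icc 0 T,
          F t s - δ * (∫ τ in (0:ℝ)..t, Real.exp (α * (t - τ)) * F τ s)
              - γ * (∫ σ in (0:ℝ)..s, Real.exp (β * (s - σ)) * F t σ) = G t s) ∧
      (∀ F' : ℝ → ℝ → ℝ,
        ContinuousOn (fun p : ℝ × ℝ => F' p.1 p.2) (Set.Icc 0 T ×ˢ Set.Icc 0 T) →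
        (∀ t ∈ Set.Icc 0 T, ∀ s ∈ Set.Icc 0 T,
          F' t s - δ * (∫ τ in (0:ℝ)..t, Real.exp (α * (t - τ)) * F' τ s)
              - γ * (∫ σ in (0:ℝ)..s, Real.exp (β * (s - σ)) * F' t σ) = G t s) →
        ∀ t ∈ Set.Icc 0 T, ∀ s ∈ Set.Icc 0 T, F' t s = F t s) ∧
      ∀ Y : ℝ → ℝ → ℝ,
        ContinuousOn (fun p : ℝ × ℝ => Y p.1 p.2) (Set.Icc 0 T ×ˢ Set.Icc 0 T) →
        (∀ t ∈ Set.Icc 0 T, ∀ s ∈ Set.Icc 0 T,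
          Y t s - δ * (∫ τ in (0:ℝ)..t, Real.exp (α * (t - τ)) * Y τ s)
              - γ * (∫ σ in (0:ℝ)..s, Real.exp (β * (s - σ)) * Y t σ) ≤ G t s) →
        ∀ t ∈ Set.Icc 0 T, ∀ s ∈ Set.Icc 0 T, Y t s ≤ F t s := by
  -- `x - (δ * _ + γ * _)` is `x - volterra δ γ α β _ t s` by definition
  simp only [sub_sub]
  obtain ⟨L, hαL, hβL, hκ⟩ := exists_contraction_rate δ γ α β
  have hΦ := contractingWith_picardMap hT.le hG δ γ hαL hβL hκ
  obtain ⟨F, hF, hFfix⟩ := exists_weightedRestrict_eq hT.le L (ContractingWith.fixedPoint _ hΦ)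
  refine ⟨F, ⟨hF, (isFixedPt_picardMap_iff hT.le hG δ γ α β L hF).1
    (hFfix ▸ hΦ.fixedPoint_isFixedPt)⟩, fun F' hF' hF'sol t ht s hs => ?_, fun Y hY hYsub => ?_⟩
  · have hF'fix := hΦ.fixedPoint_unique ((isFixedPt_picardMap_iff hT.le hG δ γ α β L hF').2 hF'sol)
    rw [← hFfix] at hF'fix
    exact le_antisymm ((weightedRestrict_le_iff L hF' hF).1 hF'fix.le t ht s hs)
      ((weightedRestrict_le_iff L hF hF').1 hF'fix.ge t ht s hs)
  · refine (weightedRestrict_le_iff L hY hF).1 (hFfix ▸ hΦ.le_fixedPoint ?_ ?_)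
    · exact monotone_picardMap hT.le hG α β L hδ.le hγ.le
    · exact (le_picardMap_iff hT.le hG δ γ α β L hY).2 hYsub
end
end
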